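/- arXiv:1811.10768 — 3 statements merged into one kernel-verified Lean document; each statement's English description precedes it below -/
import Mathlib

section
/- Let n ≥ 3 and let V ∈ RH_q(ℝⁿ) with q ∈ (n/2, ∞). Then there exists a constant C > 0 such that for every x ∈ ℝⁿ and all radii 0 < r < R < ∞ one has (1/r^{n−2}) ∫_{B(x,r)} V(y) dy ≤ C (R/r)^{n/q − 2} (1/R^{n−2}) ∫_{B(x,R)} V(y) dy. -/
/-!
Hölder's inequality on the small ball, monotonicity of `∫ V^q` in the ball, and the reverse
Hölder inequality on the large ball give
`∫_{B(x,r)} V ≤ C |B(x,r)|^{1-1/q} |B(x,R)|^{1/q-1} ∫_{B(x,R)} V = C (r/R)^{n-n/q} ∫_{B(x,R)} V`;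
dividing by `r^{n-2}` rearranges the powers into the claimed form.
-/

open MeasureTheory Metric ENNReal

noncomputable section

/-- Euclidean space `ℝⁿ`. -/
abbrev E (n : ℕ) := EuclideanSpace ℝ (Fin n)

/-- `V` is a nonnegative function belonging to the reverse Hölder class `RH_q(ℝⁿ)`:
`V ∈ L^q_loc` and there is `C > 0` such that for every ball `B`,
`((1/|B|) ∫_B V^q)^(1/q) ≤ C (1/|B|) ∫_B V`. -/
def IsRH (n : ℕ) (q : ℝ) (V : E n → ℝ) : Prop :=
  (∀ x, 0 ≤ V x) ∧ Measurable V ∧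
    (∀ (x : E n) (r : ℝ), 0 < r → IntegrableOn V (ball x r) volume) ∧
    (∀ (x : E n) (r : ℝ), 0 < r → IntegrableOn (fun y => V y ^ q) (ball x r) volume) ∧
    ∃ C > 0, ∀ (x : E n) (r : ℝ), 0 < r →
      ((volume (ball x r)).toReal⁻¹ * ∫ y in ball x r, V y ^ q) ^ (1 / q) ≤
        C * ((volume (ball x r)).toReal⁻¹ * ∫ y in ball x r, V y)

theorem setIntegral_le_rpow_setIntegral_rpow_mul_measureReal {α : Type*} [MeasurableSpace α]
    {μ : Measure α} {s : Set α} {f : α → ℝ} {p : ℝ} (hp : 1 < p) (hs : μ s ≠ ∞)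
    (hf₀ : ∀ x, 0 ≤ f x) (hfm : AEStronglyMeasurable f (μ.restrict s))
    (hfp : IntegrableOn (fun x => f x ^ p) s μ) :
    ∫ x in s, f x ∂μ ≤ (∫ x in s, f x ^ p ∂μ) ^ (1 / p) * μ.real s ^ (1 - 1 / p) := by
  have hpq := Real.HolderConjugate.conjExponent hp
  have : IsFiniteMeasure (μ.restrict s) := isFiniteMeasure_restrict.2 hs
  have hp₀ : ENNReal.ofReal p ≠ 0 := (ENNReal.ofReal_pos.2 (zero_lt_one.trans hp)).ne'
  have hf : MemLp f (ENNReal.ofReal p) (μ.restrict s) := by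
    refine (integrable_norm_rpow_iff hfm hp₀ ofReal_ne_top).1 ?_
    rw [ENNReal.toReal_ofReal (zero_lt_one.trans hp).le]
    exact hfp.congr (ae_of_all _ fun x => by simp [abs_of_nonneg (hf₀ x)])
  have h := integral_mul_le_Lp_mul_Lq_of_nonneg hpq (ae_of_all _ hf₀)
    (ae_of_all _ fun _ => zero_le_one) hf (memLp_const 1)
  rw [one_div p, hpq.one_sub_inv, ← one_div]
  simpa [measureReal_def] using h

theorem measureReal_ball_pos {X : Type*} [PseudoMetricSpace X] [ProperSpace X]
    [MeasurableSpace X] (μ : Measure X) [μ.IsOpenPosMeasure] [IsFiniteMeasureOnCompacts μ]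
    (x : X) {r : ℝ} (hr : 0 < r) : 0 < μ.real (ball x r) :=
  ENNReal.toReal_pos (measure_ball_pos μ x hr).ne' measure_ball_lt_top.ne

theorem Measure.addHaar_real_ball_div_addHaar_real_ball {F : Type*} [NormedAddCommGroup F]
    [NormedSpace ℝ F] [MeasurableSpace F] [BorelSpace F] [FiniteDimensional ℝ F]
    (μ : Measure F) [μ.IsAddHaarMeasure] (x : F) {r R : ℝ} (hr : 0 < r) (hR : 0 < R) :
    μ.real (ball x r) / μ.real (ball x R) = (r / R) ^ Module.finrank ℝ F := by
  have hunit := measureReal_ball_pos μ (0 : F) one_pos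
  simp only [measureReal_def, Measure.addHaar_ball_of_pos μ x hr,
    Measure.addHaar_ball_of_pos μ x hR, ENNReal.toReal_mul,
    ENNReal.toReal_ofReal (pow_nonneg hr.le _), ENNReal.toReal_ofReal (pow_nonneg hR.le _)]
  rw [measureReal_def] at hunit
  rw [div_pow]
  field_simp

theorem one_div_rpow_mul_div_rpow {r R : ℝ} (hr : 0 < r) (hR : 0 < R) (a b c : ℝ) :
    1 / r ^ (a - c) * (r / R) ^ (a - b) = (R / r) ^ (b - c) * (1 / R ^ (a - c)) := by
  simp only [Real.rpow_def_of_pos hr, Real.rpow_def_of_pos hR,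
    Real.rpow_def_of_pos (div_pos hr hR), Real.rpow_def_of_pos (div_pos hR hr),
    Real.log_div hr.ne' hR.ne', Real.log_div hR.ne' hr.ne', one_div,
    ← Real.exp_neg, ← Real.exp_add]
  ring_nf

namespace IsRH

variable {n : ℕ} {q : ℝ} {V : E n → ℝ}

theorem exists_rpow_setIntegral_rpow_le (hV : IsRH n q V) :
    ∃ C > 0, ∀ (x : E n) (R : ℝ), 0 < R →
      (∫ y in ball x R, V y ^ q) ^ (1 / q) ≤
        C * volume.real (ball x R) ^ (1 / q - 1) * ∫ y in ball x R, V y := by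
  obtain ⟨hV₀, -, -, -, C, hC, hRH⟩ := hV
  refine ⟨C, hC, fun x R hR => ?_⟩
  have hB := hRH x R hR
  rw [← measureReal_def] at hB
  set m := volume.real (ball x R)
  have hm : 0 < m := measureReal_ball_pos volume x hR
  have hJ : 0 ≤ ∫ y in ball x R, V y ^ q :=
    setIntegral_nonneg measurableSet_ball fun y _ => Real.rpow_nonneg (hV₀ y) q
  have h := mul_le_mul_of_nonneg_left hB (Real.rpow_nonneg hm.le (1 / q))
  rw [Real.mul_rpow (inv_nonneg.2 hm.le) hJ, ← mul_assoc, Real.inv_rpow hm.le,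
    mul_inv_cancel₀ (Real.rpow_pos_of_pos hm _).ne', one_mul] at h
  calc (∫ y in ball x R, V y ^ q) ^ (1 / q)
      ≤ m ^ (1 / q) * (C * (m⁻¹ * ∫ y in ball x R, V y)) := h
    _ = C * m ^ (1 / q - 1) * ∫ y in ball x R, V y := by
      rw [Real.rpow_sub hm, Real.rpow_one]; ring

theorem exists_setIntegral_ball_le_mul_rpow (hV : IsRH n q V) (hq : 1 < q) :
    ∃ C > 0, ∀ (x : E n) (r R : ℝ), 0 < r → r ≤ R →
      ∫ y in ball x r, V y ≤ C * (r / R) ^ ((n : ℝ) - n / q) * ∫ y in ball x R, V y := by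
  obtain ⟨C, hC, hRH⟩ := hV.exists_rpow_setIntegral_rpow_le
  obtain ⟨hV₀, hVm, -, hVq, -⟩ := hV
  refine ⟨C, hC, fun x r R hr hrR => ?_⟩
  have hR := hr.trans_le hrR
  have hmr := measureReal_ball_pos volume x hr
  have hmR := measureReal_ball_pos volume x hR
  have hJ : ∫ y in ball x r, V y ^ q ≤ ∫ y in ball x R, V y ^ q :=
    setIntegral_mono_set (hVq x R hR) (ae_of_all _ fun y => Real.rpow_nonneg (hV₀ y) q)
      (ball_subset_ball hrR).eventuallyLE
  have hratio : volume.real (ball x r) ^ (1 - 1 / q) * volume.real (ball x R) ^ (1 / q - 1) =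
      (r / R) ^ ((n : ℝ) - n / q) := by
    rw [show 1 / q - 1 = -(1 - 1 / q) by ring, Real.rpow_neg hmR.le, ← div_eq_mul_inv,
      ← Real.div_rpow hmr.le hmR.le, Measure.addHaar_real_ball_div_addHaar_real_ball _ x hr hR,
      finrank_euclideanSpace_fin, ← Real.rpow_natCast, ← Real.rpow_mul (div_pos hr hR).le]
    ring_nf
  calc ∫ y in ball x r, V y
      ≤ (∫ y in ball x r, V y ^ q) ^ (1 / q) * volume.real (ball x r) ^ (1 - 1 / q) :=
        setIntegral_le_rpow_setIntegral_rpow_mul_measureReal hq measure_ball_lt_top.ne hV₀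
          hVm.aestronglyMeasurable (hVq x r hr)
    _ ≤ (∫ y in ball x R, V y ^ q) ^ (1 / q) * volume.real (ball x r) ^ (1 - 1 / q) := by
        gcongr
        exact setIntegral_nonneg measurableSet_ball fun y _ => Real.rpow_nonneg (hV₀ y) q
    _ ≤ C * volume.real (ball x R) ^ (1 / q - 1) * (∫ y in ball x R, V y) *
          volume.real (ball x r) ^ (1 - 1 / q) := by
        gcongr
        exact hRH x R hR
    _ = C * (r / R) ^ ((n : ℝ) - n / q) * ∫ y in ball x R, V y := by
        rw [← hratio]; ring

end IsRH

/-- If `n ≥ 3` and `V ∈ RH_q(ℝⁿ)` with `q ∈ (n/2, ∞)`, then there exists `C > 0` such that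
for every `x ∈ ℝⁿ` and all `0 < r < R < ∞`,
`(1/r^(n-2)) ∫_{B(x,r)} V ≤ C (R/r)^(n/q-2) (1/R^(n-2)) ∫_{B(x,R)} V`. -/
theorem stmt0 (n : ℕ) (hn : 3 ≤ n) (q : ℝ) (hq : (n : ℝ) / 2 < q)
    (V : E n → ℝ) (hV : IsRH n q V) :
    ∃ C > 0, ∀ (x : E n) (r R : ℝ), 0 < r → r < R →
      (1 / r ^ ((n : ℝ) - 2)) * ∫ y in ball x r, V y ≤
        C * (R / r) ^ ((n : ℝ) / q - 2) *
          ((1 / R ^ ((n : ℝ) - 2)) * ∫ y in ball x R, V y) := by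
  have hq₁ : 1 < q := by
    have : (3 : ℝ) ≤ n := by exact_mod_cast hn
    linarith
  obtain ⟨C, hC, hV⟩ := hV.exists_setIntegral_ball_le_mul_rpow hq₁
  refine ⟨C, hC, fun x r R hr hrR => ?_⟩
  calc 1 / r ^ ((n : ℝ) - 2) * ∫ y in ball x r, V y
      ≤ 1 / r ^ ((n : ℝ) - 2) * (C * (r / R) ^ ((n : ℝ) - n / q) * ∫ y in ball x R, V y) := by
        gcongr
        exact hV x r R hr hrR.le
    _ = C * (R / r) ^ ((n : ℝ) / q - 2) * (1 / R ^ ((n : ℝ) - 2) * ∫ y in ball x R, V y) := by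
        linear_combination (C * ∫ y in ball x R, V y) *
          one_div_rpow_mul_div_rpow hr (hr.trans hrR) n (n / q) 2

end
end

section
/- Let n ≥ 3 and let V ∈ RH_q(ℝⁿ) with q ∈ (n/2, ∞), V not almost everywhere zero. Then there exist positive constants C and k₀ such that for every x ∈ ℝⁿ and every R ∈ (0,∞) with R·m(x,V) ≥ 1, one has (1/R^{n−2}) ∫_{B(x,R)} V(y) dy ≤ C (R·m(x,V))^{k₀}. -/
/-!
A reverse Hölder weight is doubling in a strong form: there is `t > 1` with
`∫_{B(x,tr)} V ≤ 2 ∫_{B(x,r)} V`. By Hölder's inequality and the reverse Hölder inequality, the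
integral of `V` over the annulus `B(x,tr) \ B(x,r)` is at most `C (1 - t⁻ⁿ)^(1-1/q)` times its
integral over `B(x,tr)`, hence at most half of it once `t` is close to `1`. Iterating gives
`∫_{B(x,R)} V ≤ 2 (R/a)^k₀ ∫_{B(x,a)} V` for `0 < a ≤ R`, with `k₀ = log_t 2`. Choosing `a` in
`auxSet` with `1/(t m(x,V)) < a ≤ 1/m(x,V)` gives `∫_{B(x,a)} V ≤ a^(n-2) ≤ R^(n-2)` and
`R/a < t R m(x,V)`, whence the bound with `C = 4`.
-/

open MeasureTheory Metric ENNReal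

noncomputable section

/-- The set `{ r > 0 : r^(2-n) ∫_{B(x,r)} V ≤ 1 }` entering the definition of the
auxiliary function `m(·, V)`. -/
def auxSet (n : ℕ) (V : E n → ℝ) (x : E n) : Set ℝ :=
  {r : ℝ | 0 < r ∧ r ^ ((2 : ℝ) - n) * ∫ y in ball x r, V y ≤ 1}

/-- Shen's auxiliary function `m(x, V)`, defined by `1/m(x,V) = sup auxSet`. -/
def auxm (n : ℕ) (V : E n → ℝ) (x : E n) : ℝ := (sSup (auxSet n V x))⁻¹

open Set Filter Topology Module

theorem setIntegral_le_rpow_integral_rpow_mul_measureReal {α : Type*} [MeasurableSpace α]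
    {μ : Measure α} {f : α → ℝ} {q : ℝ} {S : Set α} (hq : 1 < q) (hS : μ S ≠ ∞)
    (hf0 : ∀ x, 0 ≤ f x) (hf : AEStronglyMeasurable f (μ.restrict S))
    (hfq : IntegrableOn (fun x => f x ^ q) S μ) :
    ∫ x in S, f x ∂μ ≤ (∫ x in S, f x ^ q ∂μ) ^ (1 / q) * μ.real S ^ (1 - 1 / q) := by
  have hq0 : 0 < q := one_pos.trans hq
  have hpq : q.HolderConjugate q.conjExponent := .conjExponent hq
  have : IsFiniteMeasure (μ.restrict S) := isFiniteMeasure_restrict.mpr hS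
  have hqne : ENNReal.ofReal q ≠ 0 := by simpa using hq0
  have hfLq : MemLp f (ENNReal.ofReal q) (μ.restrict S) := by
    rw [← memLp_norm_rpow_iff hf hqne ofReal_ne_top, ENNReal.div_self hqne ofReal_ne_top,
      memLp_one_iff_integrable]
    simp only [Real.norm_of_nonneg (hf0 _), toReal_ofReal hq0.le]
    exact hfq
  have hconj : 1 / q.conjExponent = 1 - 1 / q := by
    linarith [hpq.inv_add_inv_eq_one, one_div q, one_div q.conjExponent]
  simpa [hconj] using integral_mul_le_Lp_mul_Lq_of_nonneg hpq (.of_forall hf0)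
    (.of_forall fun _ => zero_le_one) hfLq (memLp_const (1 : ℝ))

theorem measureReal_ball_sdiff_ball_div {F : Type*} [NormedAddCommGroup F] [NormedSpace ℝ F]
    [MeasurableSpace F] [BorelSpace F] [FiniteDimensional ℝ F] (μ : Measure F)
    [μ.IsAddHaarMeasure] (x : F) {r t : ℝ} (hr : 0 < r) (ht : 1 ≤ t) :
    μ.real (ball x (t * r) \ ball x r) / μ.real (ball x (t * r)) = 1 - (t ^ finrank ℝ F)⁻¹ := by
  have ht0 : 0 < t := one_pos.trans_le ht
  have hbig : μ.real (ball x (t * r)) = t ^ finrank ℝ F * μ.real (ball x r) := by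
    rw [measureReal_def, Measure.addHaar_ball_mul_of_pos μ x ht0, ENNReal.toReal_mul,
      toReal_ofReal (by positivity), measureReal_def, Measure.addHaar_ball_center μ x r]
  have hsmall : 0 < μ.real (ball x r) :=
    ENNReal.toReal_pos (measure_ball_pos μ x hr).ne' measure_ball_lt_top.ne
  rw [measureReal_sdiff (ball_subset_ball (le_mul_of_one_le_left hr.le ht)) measurableSet_ball,
    hbig]
  field_simp

theorem le_two_mul_rpow_logb_mul_of_doubling {f : ℝ → ℝ} {t : ℝ} (ht : 1 < t)
    (hmono : MonotoneOn f (Ioi 0)) (hdouble : ∀ r, 0 < r → f (t * r) ≤ 2 * f r)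
    {a R : ℝ} (ha : 0 < a) (haR : a ≤ R) :
    f R ≤ 2 * (R / a) ^ Real.logb t 2 * f a := by
  have ht0 : 0 < t := one_pos.trans ht
  have hfa : 0 ≤ f a := by
    linarith [hdouble a ha, hmono ha (mul_pos ht0 ha) (le_mul_of_one_le_left ha.le ht.le)]
  have hiter : ∀ k : ℕ, f (t ^ k * a) ≤ 2 ^ k * f a := by
    intro k
    induction k with
    | zero => simp
    | succ k ih =>
      calc f (t ^ (k + 1) * a) = f (t * (t ^ k * a)) := by ring_nf
        _ ≤ 2 * f (t ^ k * a) := hdouble _ (by positivity)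
        _ ≤ 2 ^ (k + 1) * f a := by rw [pow_succ']; linarith
  obtain ⟨k, hkR, hRk⟩ := exists_nat_pow_near ((one_le_div ha).mpr haR) ht
  have hpow : (t ^ k) ^ Real.logb t 2 = 2 ^ k := by
    rw [← Real.rpow_natCast, ← Real.rpow_mul ht0.le, mul_comm, Real.rpow_mul ht0.le,
      Real.rpow_logb ht0 ht.ne' two_pos, Real.rpow_natCast]
  calc f R ≤ f (t ^ (k + 1) * a) :=
        hmono (ha.trans_le haR) (mem_Ioi.mpr (by positivity)) ((div_lt_iff₀ ha).mp hRk).le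
    _ ≤ 2 * (t ^ k) ^ Real.logb t 2 * f a := by rw [hpow, ← pow_succ']; exact hiter _
    _ ≤ 2 * (R / a) ^ Real.logb t 2 * f a := by
        gcongr
        exact (Real.logb_pos ht one_lt_two).le

section ReverseHolder

variable {n : ℕ} {q : ℝ} {V : E n → ℝ}

theorem IsRH.monotoneOn_integral_ball (hV : IsRH n q V) (x : E n) :
    MonotoneOn (fun r => ∫ y in ball x r, V y) (Ioi 0) := fun _ _ _ hs hrs =>
  setIntegral_mono_set (hV.2.2.1 x _ hs) (.of_forall hV.1) (ball_subset_ball hrs).eventuallyLE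

theorem IsRH.exists_setIntegral_le (hV : IsRH n q V) (hq : 1 < q) :
    ∃ C > 0, ∀ (x : E n) (r : ℝ), 0 < r → ∀ S ⊆ ball x r, MeasurableSet S →
      ∫ y in S, V y ≤
        C * (volume.real S / volume.real (ball x r)) ^ (1 - 1 / q) * ∫ y in ball x r, V y := by
  obtain ⟨hV0, hVm, -, hVq, C, hC, hRH⟩ := hV
  refine ⟨C, hC, fun x r hr S hSB hS => ?_⟩
  set B := volume.real (ball x r)
  have hB : 0 < B := ENNReal.toReal_pos (measure_ball_pos volume x hr).ne' measure_ball_lt_top.ne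
  have hVqB : 0 ≤ ∫ y in ball x r, V y ^ q :=
    setIntegral_nonneg measurableSet_ball fun y _ => Real.rpow_nonneg (hV0 y) q
  have hLqB : (∫ y in ball x r, V y ^ q) ^ (1 / q) ≤
      C * B ^ (1 / q - 1) * ∫ y in ball x r, V y := by
    calc (∫ y in ball x r, V y ^ q) ^ (1 / q)
        = B ^ (1 / q) * (B⁻¹ * ∫ y in ball x r, V y ^ q) ^ (1 / q) := by
          rw [← Real.mul_rpow hB.le (by positivity), mul_inv_cancel_left₀ hB.ne']
      _ ≤ B ^ (1 / q) * (C * (B⁻¹ * ∫ y in ball x r, V y)) := by gcongr; exact hRH x r hr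
      _ = C * B ^ (1 / q - 1) * ∫ y in ball x r, V y := by
          rw [Real.rpow_sub hB, Real.rpow_one]; ring
  have hLqS : (∫ y in S, V y ^ q) ^ (1 / q) ≤ (∫ y in ball x r, V y ^ q) ^ (1 / q) := by
    refine Real.rpow_le_rpow (setIntegral_nonneg hS fun y _ => Real.rpow_nonneg (hV0 y) q) ?_
      (by positivity)
    exact setIntegral_mono_set (hVq x r hr) (.of_forall fun y => Real.rpow_nonneg (hV0 y) q)
      hSB.eventuallyLE
  calc ∫ y in S, V y
      ≤ (∫ y in S, V y ^ q) ^ (1 / q) * volume.real S ^ (1 - 1 / q) :=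
        setIntegral_le_rpow_integral_rpow_mul_measureReal hq
          (measure_ne_top_of_subset hSB measure_ball_lt_top.ne) hV0 hVm.aestronglyMeasurable
          ((hVq x r hr).mono_set hSB)
    _ ≤ C * B ^ (1 / q - 1) * (∫ y in ball x r, V y) * volume.real S ^ (1 - 1 / q) := by
        gcongr; exact hLqS.trans hLqB
    _ = C * (volume.real S / B) ^ (1 - 1 / q) * ∫ y in ball x r, V y := by
        rw [Real.div_rpow measureReal_nonneg hB.le, ← neg_sub, Real.rpow_neg hB.le]
        ring

theorem IsRH.exists_integral_ball_mul_le (hV : IsRH n q V) (hq : 1 < q) :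
    ∃ t > 1, ∀ (x : E n) (r : ℝ), 0 < r →
      ∫ y in ball x (t * r), V y ≤ 2 * ∫ y in ball x r, V y := by
  obtain ⟨C, -, hC⟩ := hV.exists_setIntegral_le hq
  have hp : 0 < 1 - 1 / q := by rw [sub_pos, div_lt_one (one_pos.trans hq)]; exact hq
  have hlim : Tendsto (fun t : ℝ => C * (1 - (t ^ n)⁻¹) ^ (1 - 1 / q)) (𝓝 1) (𝓝 0) := by
    have hcont : ContinuousAt (fun t : ℝ => C * (1 - (t ^ n)⁻¹) ^ (1 - 1 / q)) 1 := by
      fun_prop (disch := first | positivity | simp)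
    have := hcont.tendsto
    rwa [one_pow, inv_one, sub_self, Real.zero_rpow hp.ne', mul_zero] at this
  have hev : ∀ᶠ t in 𝓝[>] (1 : ℝ), C * (1 - (t ^ n)⁻¹) ^ (1 - 1 / q) < 1 / 2 ∧ 1 < t :=
    ((hlim.eventually (gt_mem_nhds one_half_pos)).filter_mono nhdsWithin_le_nhds).and
      self_mem_nhdsWithin
  obtain ⟨t, htC, ht⟩ := hev.exists
  refine ⟨t, ht, fun x r hr => ?_⟩
  have hsub : ball x r ⊆ ball x (t * r) := ball_subset_ball (le_mul_of_one_le_left hr.le ht.le)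
  have htr : 0 < t * r := by positivity
  have hannulus := hC x (t * r) htr (ball x (t * r) \ ball x r) sdiff_subset
    (measurableSet_ball.diff measurableSet_ball)
  rw [setIntegral_sdiff measurableSet_ball (hV.2.2.1 x _ htr) hsub,
    measureReal_ball_sdiff_ball_div volume x hr ht.le, finrank_euclideanSpace_fin] at hannulus
  have hpos : 0 ≤ ∫ y in ball x (t * r), V y :=
    setIntegral_nonneg measurableSet_ball fun y _ => hV.1 y
  nlinarith

end ReverseHolder

section AuxiliaryFunction

variable {n : ℕ} {V : E n → ℝ} {x : E n}

theorem integral_ball_le_rpow_of_mem_auxSet {a : ℝ} (ha : a ∈ auxSet n V x) :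
    ∫ y in ball x a, V y ≤ a ^ ((n : ℝ) - 2) := by
  obtain ⟨ha0, haI⟩ := ha
  rw [← neg_sub, Real.rpow_neg ha0.le, ← one_div, le_div_iff₀' (by positivity)]
  exact haI

theorem exists_mem_auxSet_gt (hm : 0 < auxm n V x) {s : ℝ} (hs : s < (auxm n V x)⁻¹) :
    ∃ a ∈ auxSet n V x, s < a ∧ a ≤ (auxm n V x)⁻¹ := by
  rw [auxm, inv_inv] at hs ⊢
  have hsup : 0 < sSup (auxSet n V x) := inv_pos.mp hm
  have hne : (auxSet n V x).Nonempty := by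
    by_contra h
    rw [not_nonempty_iff_eq_empty.mp h, Real.sSup_empty] at hsup
    exact hsup.false
  have hbdd : BddAbove (auxSet n V x) := by
    by_contra h
    rw [Real.sSup_of_not_bddAbove h] at hsup
    exact hsup.false
  obtain ⟨a, ha, hsa⟩ := exists_lt_of_lt_csSup hne hs
  exact ⟨a, ha, hsa, le_csSup hbdd ha⟩

end AuxiliaryFunction

theorem stmt1_general (n : ℕ) (hn : 3 ≤ n) (q : ℝ) (hq : (n : ℝ) / 2 < q)
    (V : E n → ℝ) (hV : IsRH n q V) :
    ∃ C > 0, ∃ k₀ : ℝ, 0 < k₀ ∧ ∀ (x : E n) (R : ℝ), 0 < R → 1 ≤ R * auxm n V x →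
      (1 / R ^ ((n : ℝ) - 2)) * ∫ y in ball x R, V y ≤ C * (R * auxm n V x) ^ k₀ := by
  have hn2 : (2 : ℝ) ≤ n := by exact_mod_cast (by omega : 2 ≤ n)
  obtain ⟨t, ht, hdouble⟩ := hV.exists_integral_ball_mul_le (by linarith)
  refine ⟨4, by norm_num, Real.logb t 2, Real.logb_pos ht one_lt_two, fun x R hR hRm => ?_⟩
  set m := auxm n V x
  have hm : 0 < m := pos_of_mul_pos_right (one_pos.trans_le hRm) hR.le
  obtain ⟨a, ha, hta, ham⟩ := exists_mem_auxSet_gt hm (div_lt_self (inv_pos.mpr hm) ht)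
  have ha0 : 0 < a := ha.1
  have haR : a ≤ R := ham.trans ((inv_le_iff_one_le_mul₀ hm).mpr (by linarith))
  have hRa : R / a ≤ t * (R * m) := by
    have htma : 1 < a * t * m :=
      (inv_lt_iff_one_lt_mul₀ hm).mp ((div_lt_iff₀ (one_pos.trans ht)).mp hta)
    rw [div_le_iff₀ ha0]
    nlinarith
  have hIR := le_two_mul_rpow_logb_mul_of_doubling ht (hV.monotoneOn_integral_ball x) (hdouble x)
    ha0 haR
  have hRpow : 0 < R ^ ((n : ℝ) - 2) := by positivity
  rw [one_div, inv_mul_le_iff₀ hRpow]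
  calc ∫ y in ball x R, V y ≤ 2 * (R / a) ^ Real.logb t 2 * a ^ ((n : ℝ) - 2) := by
        grw [hIR, integral_ball_le_rpow_of_mem_auxSet ha]
    _ ≤ 2 * (t * (R * m)) ^ Real.logb t 2 * R ^ ((n : ℝ) - 2) := by
        gcongr
        exact (Real.logb_pos ht one_lt_two).le
    _ = R ^ ((n : ℝ) - 2) * (4 * (R * m) ^ Real.logb t 2) := by
        rw [Real.mul_rpow (by positivity) (by positivity),
          Real.rpow_logb (by positivity) ht.ne' two_pos]
        ring

/-- If `n ≥ 3` and `V ∈ RH_q(ℝⁿ)`, `q ∈ (n/2, ∞)`, `V` not a.e. zero, then there exist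
`C, k₀ > 0` such that for every `x` and every `R > 0` with `R·m(x,V) ≥ 1`,
`(1/R^(n-2)) ∫_{B(x,R)} V ≤ C (R·m(x,V))^{k₀}`. -/
theorem stmt1 (n : ℕ) (hn : 3 ≤ n) (q : ℝ) (hq : (n : ℝ) / 2 < q)
    (V : E n → ℝ) (hV : IsRH n q V) (hV0 : ¬ V =ᵐ[volume] 0) :
    ∃ C > 0, ∃ k₀ : ℝ, 0 < k₀ ∧ ∀ (x : E n) (R : ℝ), 0 < R → 1 ≤ R * auxm n V x →
      (1 / R ^ ((n : ℝ) - 2)) * ∫ y in ball x R, V y ≤ C * (R * auxm n V x) ^ k₀ :=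
  stmt1_general n hn q hq V hV

end
end

section
/- Let n ≥ 3 and let V ∈ RH_q(ℝⁿ) with q ∈ (n/2, ∞), V not almost everywhere zero. Then there exists a constant C > 0 such that for every y ∈ ℝⁿ and every R ∈ (0,∞) with R·m(y,V) ≤ 1, one has (1/R^{n−2}) ∫_{B(y,R)} V(x) dx ≤ C (R·m(y,V))^{2 − n/q}; in particular this quantity is bounded by C whenever R·m(y,V) ≤ 1. -/
/-!
Hölder's inequality on `B(y,r)` followed by the reverse Hölder inequality on `B(y,r')` gives
`∫_{B(y,r)} V ≤ C (r/r')^{n(1-1/q)} ∫_{B(y,r')} V` for `r ≤ r'`, i.e. the scaled mass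
`F(r) = r^{2-n} ∫_{B(y,r)} V` satisfies `F(r) ≤ C (r/r')^{2-n/q} F(r')`. As `2 - n/q > 0`, this
makes `{r > 0 : F(r) ≤ 1}` nonempty, and bounded once `V ≢ 0`; since `r ↦ ∫_{B(y,r)} V` is left
continuous, its supremum `r₀ = 1/m(y,V)` still satisfies `F(r₀) ≤ 1`, and taking `r' = r₀` gives
the claim.
-/

open MeasureTheory Metric ENNReal

noncomputable section

open Filter Topology

section Balls

variable {X : Type*} [PseudoMetricSpace X] [MeasurableSpace X] [OpensMeasurableSpace X]
  {μ : Measure X} {f : X → ℝ} {y : X}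

theorem exists_pos_setIntegral_ball (hf0 : ∀ x, 0 ≤ f x)
    (hf : ∀ r, 0 < r → IntegrableOn f (ball y r) μ) (hne : ¬ f =ᵐ[μ] 0) :
    ∃ r > 0, 0 < ∫ x in ball y r, f x ∂μ := by
  by_contra! h
  refine hne ?_
  have hball : ∀ k : ℕ, f =ᵐ[μ.restrict (ball y (k + 1))] 0 := fun k => by
    have hk : (0 : ℝ) < k + 1 := by positivity
    exact (setIntegral_eq_zero_iff_of_nonneg_ae (ae_of_all _ hf0) (hf _ hk)).1
      ((h _ hk).antisymm (setIntegral_nonneg measurableSet_ball fun x _ => hf0 x))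
  rw [← Measure.restrict_univ (μ := μ), ← iUnion_ball_nat_succ y]
  exact (ae_restrict_iUnion_iff _ _).2 hball

theorem setIntegral_ball_le_of_forall_lt {r₀ c : ℝ} (hf : IntegrableOn f (ball y r₀) μ)
    (h : ∀ r < r₀, ∫ x in ball y r, f x ∂μ ≤ c) : ∫ x in ball y r₀, f x ∂μ ≤ c := by
  have hmono : Monotone fun k : ℕ => ball y (r₀ - 1 / (k + 1)) := fun a b hab =>
    ball_subset_ball (by gcongr)
  have hU : ⋃ k : ℕ, ball y (r₀ - 1 / (k + 1)) = ball y r₀ := by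
    ext x
    simp only [Set.mem_iUnion, mem_ball]
    constructor
    · rintro ⟨k, hk⟩
      linarith [Nat.one_div_pos_of_nat (α := ℝ) (n := k)]
    · intro hx
      obtain ⟨k, hk⟩ := exists_nat_one_div_lt (sub_pos.2 hx)
      exact ⟨k, by linarith⟩
  have hlim := tendsto_setIntegral_of_monotone (fun _ => measurableSet_ball) hmono (hU ▸ hf)
  rw [hU] at hlim
  exact le_of_tendsto' hlim fun k => h _ (by linarith [Nat.one_div_pos_of_nat (α := ℝ) (n := k)])

end Balls

theorem setIntegral_le_integral_rpow_mul_measureReal {α : Type*} [MeasurableSpace α]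
    {μ : Measure α} {s : Set α} (hs : μ s ≠ ∞) {q : ℝ} (hq : 1 < q) {f : α → ℝ}
    (hf0 : ∀ x, 0 ≤ f x) (hfm : AEStronglyMeasurable f (μ.restrict s))
    (hfq : IntegrableOn (fun x => f x ^ q) s μ) :
    ∫ x in s, f x ∂μ ≤ (∫ x in s, f x ^ q ∂μ) ^ (1 / q) * μ.real s ^ (1 - 1 / q) := by
  have hq0 : 0 < q := by linarith
  have : IsFiniteMeasure (μ.restrict s) := isFiniteMeasure_restrict.2 hs
  have hf : MemLp f (ENNReal.ofReal q) (μ.restrict s) := by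
    have hne : ENNReal.ofReal q ≠ 0 := by simpa using hq0
    rw [← memLp_norm_rpow_iff hfm hne ofReal_ne_top, ENNReal.div_self hne ofReal_ne_top,
      memLp_one_iff_integrable]
    refine hfq.congr (ae_of_all _ fun x => ?_)
    simp only [Real.norm_of_nonneg (hf0 x), ENNReal.toReal_ofReal hq0.le]
  have hconj := Real.HolderConjugate.conjExponent hq
  have h := integral_mul_le_Lp_mul_Lq_of_nonneg hconj (ae_of_all _ hf0)
    (ae_of_all _ fun _ => zero_le_one) hf (memLp_const 1)
  simpa [measureReal_restrict_apply_univ, ← hconj.one_sub_inv] using h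

theorem measureReal_ball_eq_div_pow_mul {F : Type*} [NormedAddCommGroup F] [NormedSpace ℝ F]
    [MeasurableSpace F] [BorelSpace F] [FiniteDimensional ℝ F] (μ : Measure F)
    [μ.IsAddHaarMeasure] (x : F) {r r' : ℝ} (hr : 0 < r) (hr' : 0 < r') :
    μ.real (ball x r) = (r / r') ^ Module.finrank ℝ F * μ.real (ball x r') := by
  have hball : ∀ s : ℝ, 0 < s →
      μ.real (ball x s) = s ^ Module.finrank ℝ F * μ.real (ball 0 1) := fun s hs => by
    rw [measureReal_def, Measure.addHaar_ball_of_pos μ x hs, ENNReal.toReal_mul,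
      ENNReal.toReal_ofReal (by positivity), measureReal_def]
  rw [hball r hr, hball r' hr', ← mul_assoc, ← mul_pow, div_mul_cancel₀ r hr'.ne']

-- `auxSet n V y` is `{r | 0 < r ∧ scaledMass n V y r ≤ 1}` by definition.
def scaledMass (n : ℕ) (V : E n → ℝ) (y : E n) (r : ℝ) : ℝ :=
  r ^ ((2 : ℝ) - n) * ∫ x in ball y r, V x

theorem mem_auxSet_iff {n : ℕ} {V : E n → ℝ} {y : E n} {r : ℝ} :
    r ∈ auxSet n V y ↔ 0 < r ∧ ∫ x in ball y r, V x ≤ r ^ ((n : ℝ) - 2) := by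
  refine and_congr_right fun hr => ?_
  rw [← neg_sub, Real.rpow_neg hr.le, inv_mul_le_iff₀ (by positivity), mul_one]

namespace IsRH

variable {n : ℕ} {q : ℝ} {V : E n → ℝ}

theorem exists_integral_rpow_mul_measureReal_le (hV : IsRH n q V) :
    ∃ C > 0, ∀ (y : E n) (r : ℝ), 0 < r →
      (∫ x in ball y r, V x ^ q) ^ (1 / q) * volume.real (ball y r) ^ (1 - 1 / q) ≤
        C * ∫ x in ball y r, V x := by
  obtain ⟨hV0, -, -, -, C, hC, hRH⟩ := hV
  refine ⟨C, hC, fun y r hr => ?_⟩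
  set v := volume.real (ball y r)
  have hv : 0 < v :=
    ENNReal.toReal_pos (measure_ball_pos volume y hr).ne' measure_ball_lt_top.ne
  have hIq : 0 ≤ ∫ x in ball y r, V x ^ q :=
    setIntegral_nonneg measurableSet_ball fun x _ => Real.rpow_nonneg (hV0 x) q
  calc (∫ x in ball y r, V x ^ q) ^ (1 / q) * v ^ (1 - 1 / q)
      = (v⁻¹ * ∫ x in ball y r, V x ^ q) ^ (1 / q) * v := by
        rw [Real.mul_rpow (inv_nonneg.2 hv.le) hIq, Real.inv_rpow hv.le,
          Real.rpow_sub hv, Real.rpow_one]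
        field_simp
    _ ≤ C * (v⁻¹ * ∫ x in ball y r, V x) * v := by gcongr; exact hRH y r hr
    _ = C * ∫ x in ball y r, V x := by field_simp

theorem exists_setIntegral_ball_le (hV : IsRH n q V) (hq : 1 < q) :
    ∃ C > 0, ∀ (y : E n) (r r' : ℝ), 0 < r → r ≤ r' →
      ∫ x in ball y r, V x ≤
        C * (r / r') ^ ((n : ℝ) * (1 - 1 / q)) * ∫ x in ball y r', V x := by
  obtain ⟨C, hC, hRH⟩ := hV.exists_integral_rpow_mul_measureReal_le
  refine ⟨C, hC, fun y r r' hr hrr' => ?_⟩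
  have hr' : 0 < r' := hr.trans_le hrr'
  have hvol : volume.real (ball y r) ^ (1 - 1 / q) =
      (r / r') ^ ((n : ℝ) * (1 - 1 / q)) * volume.real (ball y r') ^ (1 - 1 / q) := by
    rw [measureReal_ball_eq_div_pow_mul volume y hr hr', finrank_euclideanSpace_fin,
      Real.mul_rpow (by positivity) measureReal_nonneg, ← Real.rpow_natCast,
      ← Real.rpow_mul (by positivity)]
  calc ∫ x in ball y r, V x
      ≤ (∫ x in ball y r, V x ^ q) ^ (1 / q) * volume.real (ball y r) ^ (1 - 1 / q) :=
        setIntegral_le_integral_rpow_mul_measureReal measure_ball_lt_top.ne hq hV.1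
          hV.2.1.aestronglyMeasurable (hV.2.2.2.1 y r hr)
    _ ≤ (∫ x in ball y r', V x ^ q) ^ (1 / q) * volume.real (ball y r) ^ (1 - 1 / q) := by
        refine mul_le_mul_of_nonneg_right (Real.rpow_le_rpow ?_ ?_ (by positivity))
          (by positivity)
        · exact setIntegral_nonneg measurableSet_ball fun x _ => Real.rpow_nonneg (hV.1 x) q
        · exact setIntegral_mono_set (hV.2.2.2.1 y r' hr')
            (ae_of_all _ fun x => Real.rpow_nonneg (hV.1 x) q)
            (ball_subset_ball hrr').eventuallyLE
    _ = (r / r') ^ ((n : ℝ) * (1 - 1 / q)) *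
          ((∫ x in ball y r', V x ^ q) ^ (1 / q) * volume.real (ball y r') ^ (1 - 1 / q)) := by
        rw [hvol]; ring
    _ ≤ (r / r') ^ ((n : ℝ) * (1 - 1 / q)) * (C * ∫ x in ball y r', V x) :=
        mul_le_mul_of_nonneg_left (hRH y r' hr') (by positivity)
    _ = C * (r / r') ^ ((n : ℝ) * (1 - 1 / q)) * ∫ x in ball y r', V x := by ring

theorem exists_scaledMass_le (hV : IsRH n q V) (hq : 1 < q) :
    ∃ C > 0, ∀ (y : E n) (r r' : ℝ), 0 < r → r ≤ r' →
      scaledMass n V y r ≤ C * (r / r') ^ (2 - (n : ℝ) / q) * scaledMass n V y r' := by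
  obtain ⟨C, hC, hball⟩ := hV.exists_setIntegral_ball_le hq
  refine ⟨C, hC, fun y r r' hr hrr' => ?_⟩
  have hr' : 0 < r' := hr.trans_le hrr'
  have hexp : (r / r') ^ ((2 : ℝ) - n) * (r / r') ^ ((n : ℝ) * (1 - 1 / q)) =
      (r / r') ^ (2 - (n : ℝ) / q) := by
    rw [← Real.rpow_add (by positivity)]
    ring_nf
  calc scaledMass n V y r
      ≤ r ^ ((2 : ℝ) - n) *
          (C * (r / r') ^ ((n : ℝ) * (1 - 1 / q)) * ∫ x in ball y r', V x) :=
        mul_le_mul_of_nonneg_left (hball y r r' hr hrr') (by positivity)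
    _ = C * ((r / r') ^ ((2 : ℝ) - n) * (r / r') ^ ((n : ℝ) * (1 - 1 / q))) *
          scaledMass n V y r' := by
        rw [scaledMass, Real.div_rpow hr.le hr'.le ((2 : ℝ) - n)]
        field_simp
    _ = C * (r / r') ^ (2 - (n : ℝ) / q) * scaledMass n V y r' := by rw [hexp]

theorem nonempty_auxSet (hV : IsRH n q V) (hq : 1 < q) (hδ : 0 < 2 - (n : ℝ) / q) (y : E n) :
    (auxSet n V y).Nonempty := by
  obtain ⟨C, -, hF⟩ := hV.exists_scaledMass_le hq
  have hlim : Tendsto (fun r => C * r ^ (2 - (n : ℝ) / q) * scaledMass n V y 1)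
      (𝓝[>] 0) (𝓝 0) := by
    have h := ((Real.continuousAt_rpow_const 0 _ (Or.inr hδ.le)).tendsto.mono_left
      (nhdsWithin_le_nhds (s := Set.Ioi 0))).const_mul C |>.mul_const (scaledMass n V y 1)
    rwa [Real.zero_rpow hδ.ne', mul_zero, zero_mul] at h
  obtain ⟨r, hr1, hr⟩ :=
    ((hlim.eventually (gt_mem_nhds one_pos)).and (Ioo_mem_nhdsGT one_pos)).exists
  exact ⟨r, hr.1, (hF y r 1 hr.1 hr.2.le).trans (by simpa using hr1.le)⟩

theorem bddAbove_auxSet (hV : IsRH n q V) (hq : 1 < q) (hδ : 0 < 2 - (n : ℝ) / q)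
    (hV0 : ¬ V =ᵐ[volume] 0) (y : E n) : BddAbove (auxSet n V y) := by
  obtain ⟨C, hC, hF⟩ := hV.exists_scaledMass_le hq
  obtain ⟨r₁, hr₁, hpos⟩ := exists_pos_setIntegral_ball hV.1 (hV.2.2.1 y) hV0
  have hm : 0 < scaledMass n V y r₁ := mul_pos (by positivity) hpos
  have hlim : Tendsto (fun r => C * (r₁ / r) ^ (2 - (n : ℝ) / q)) atTop (𝓝 0) := by
    have h := ((tendsto_const_nhds (x := r₁)).div_atTop tendsto_id).rpow_const
      (Or.inr hδ.le) |>.const_mul C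
    rwa [Real.zero_rpow hδ.ne', mul_zero] at h
  obtain ⟨R, hR⟩ := eventually_atTop.1 (hlim.eventually (gt_mem_nhds hm))
  refine ⟨max R r₁, fun r hr => le_of_not_gt fun hlt => ?_⟩
  obtain ⟨hRr, hr₁r⟩ := max_lt_iff.1 hlt
  have hle := (hF y r₁ r hr₁ hr₁r.le).trans
    (mul_le_of_le_one_right (by have := hr.1; positivity) hr.2)
  exact (hR r hRr.le).not_ge hle

theorem sSup_auxSet_mem (hV : IsRH n q V) (hn : 2 ≤ n) (hq : (n : ℝ) / 2 < q)
    (hV0 : ¬ V =ᵐ[volume] 0) (y : E n) : sSup (auxSet n V y) ∈ auxSet n V y := by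
  have hn' : (2 : ℝ) ≤ n := by exact_mod_cast hn
  have hq1 : 1 < q := by linarith
  have hδ : 0 < 2 - (n : ℝ) / q := by rw [sub_pos, div_lt_iff₀ (by linarith)]; linarith
  have hne := hV.nonempty_auxSet hq1 hδ y
  have hbdd := hV.bddAbove_auxSet hq1 hδ hV0 y
  have hr₀ : 0 < sSup (auxSet n V y) :=
    let ⟨r, hr⟩ := hne; hr.1.trans_le (le_csSup hbdd hr)
  refine mem_auxSet_iff.2 ⟨hr₀, setIntegral_ball_le_of_forall_lt (hV.2.2.1 y _ hr₀)
    fun r hr => ?_⟩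
  obtain ⟨s, hs, hrs⟩ := exists_lt_of_lt_csSup hne hr
  calc ∫ x in ball y r, V x
      ≤ ∫ x in ball y s, V x := setIntegral_mono_set (hV.2.2.1 y s hs.1)
        (ae_of_all _ hV.1) (ball_subset_ball hrs.le).eventuallyLE
    _ ≤ s ^ ((n : ℝ) - 2) := (mem_auxSet_iff.1 hs).2
    _ ≤ sSup (auxSet n V y) ^ ((n : ℝ) - 2) :=
        Real.rpow_le_rpow hs.1.le (le_csSup hbdd hs) (by linarith)

end IsRH

/-- If `n ≥ 3` and `V ∈ RH_q(ℝⁿ)`, `q ∈ (n/2, ∞)`, `V` not a.e. zero, then there exists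
`C > 0` such that for every `y` and every `R > 0` with `R·m(y,V) ≤ 1`,
`(1/R^(n-2)) ∫_{B(y,R)} V ≤ C (R·m(y,V))^{2 - n/q}`; in particular this quantity is
bounded by `C` whenever `R·m(y,V) ≤ 1`. -/
theorem stmt3 (n : ℕ) (hn : 3 ≤ n) (q : ℝ) (hq : (n : ℝ) / 2 < q)
    (V : E n → ℝ) (hV : IsRH n q V) (hV0 : ¬ V =ᵐ[volume] 0) :
    ∃ C > 0, ∀ (y : E n) (R : ℝ), 0 < R → R * auxm n V y ≤ 1 →
      (1 / R ^ ((n : ℝ) - 2)) * ∫ x in ball y R, V x ≤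
          C * (R * auxm n V y) ^ (2 - (n : ℝ) / q) ∧
        (1 / R ^ ((n : ℝ) - 2)) * ∫ x in ball y R, V x ≤ C := by
  have hn' : (3 : ℝ) ≤ n := by exact_mod_cast hn
  have hq1 : 1 < q := by linarith
  have hδ : 0 < 2 - (n : ℝ) / q := by rw [sub_pos, div_lt_iff₀ (by linarith)]; linarith
  obtain ⟨C, hC, hF⟩ := hV.exists_scaledMass_le hq1
  refine ⟨C, hC, fun y R hR hRm => ?_⟩
  have hr₀ := hV.sSup_auxSet_mem (by omega) hq hV0 y
  set r₀ := sSup (auxSet n V y)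
  have hm : 0 < auxm n V y := inv_pos.2 hr₀.1
  have hRr₀ : R ≤ r₀ := by
    rwa [auxm, ← div_eq_mul_inv, div_le_one hr₀.1] at hRm
  have hmain : (1 / R ^ ((n : ℝ) - 2)) * ∫ x in ball y R, V x ≤
      C * (R * auxm n V y) ^ (2 - (n : ℝ) / q) :=
    calc (1 / R ^ ((n : ℝ) - 2)) * ∫ x in ball y R, V x
        = scaledMass n V y R := by rw [scaledMass, one_div, ← Real.rpow_neg hR.le, neg_sub]
      _ ≤ C * (R / r₀) ^ (2 - (n : ℝ) / q) * scaledMass n V y r₀ := hF y R r₀ hR hRr₀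
      _ ≤ C * (R * auxm n V y) ^ (2 - (n : ℝ) / q) := by
        rw [div_eq_mul_inv]
        exact mul_le_of_le_one_right (by positivity) hr₀.2
  exact ⟨hmain, hmain.trans
    (mul_le_of_le_one_right hC.le (Real.rpow_le_one (by positivity) hRm hδ.le))⟩

end
end
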